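/- If P is a generalized billiard trajectory of a convex body C in ℝ^d (d ≥ 2) with vertices p_1, …, p_n, then there exists a subset S of {p_1, …, p_n} with at most d+1 elements such that S cannot be translated into the interior of C. -/

import Mathlib

open scoped RealInnerProductSpace

noncomputable section

/-- A closed polygonal path in `ℝ^d` with `n` sides, encoded as an `n`-periodic
sequence of vertices indexed by `ℤ`, with consecutive vertices distinct. -/
def IsClosedPolygonalPath {d : ℕ} (n : ℕ) (p : ℤ → EuclideanSpace ℝ (Fin d)) : Prop :=
  2 ≤ n ∧ (∀ i : ℤ, p (i + (n : ℤ)) = p i) ∧ (∀ i : ℤ, p i ≠ p (i + 1))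

/-- The (non-normalized) inner angle bisector direction of the path `p` at the vertex `p i`. -/
def bisector {d : ℕ} (p : ℤ → EuclideanSpace ℝ (Fin d)) (i : ℤ) : EuclideanSpace ℝ (Fin d) :=
  ‖p (i - 1) - p i‖⁻¹ • (p (i - 1) - p i) + ‖p (i + 1) - p i‖⁻¹ • (p (i + 1) - p i)

/-- `p` is an `n`-periodic generalized billiard trajectory of `C`: all vertices lie on the
boundary of `C` and at each vertex the inner angle bisector is a nonzero inward normal of a
hyperplane supporting `C` at that vertex. -/
def IsGenBilliardTraj {d : ℕ} (C : Set (EuclideanSpace ℝ (Fin d))) (n : ℕ)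
    (p : ℤ → EuclideanSpace ℝ (Fin d)) : Prop :=
  IsClosedPolygonalPath n p ∧
    ∀ i : ℤ, p i ∈ frontier C ∧ bisector p i ≠ 0 ∧
      ∀ q ∈ C, 0 ≤ ⟪bisector p i, q - p i⟫

/-- The length of the closed polygonal path with vertices `p 0, p 1, …, p (n-1)`. -/
def pathLength {d : ℕ} (n : ℕ) (p : ℤ → EuclideanSpace ℝ (Fin d)) : ℝ :=
  ∑ i ∈ Finset.range n, ‖p ((i : ℤ) + 1) - p (i : ℤ)‖

/-!
The inner bisector at the vertex `p i` is `u i - u (i - 1)`, where `u i` is the unit vector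
along the edge from `p i` to `p (i + 1)`, so the bisectors telescope to zero over one period
and `0` lies in their convex hull. By Carathéodory, `0` already lies in the convex hull of at
most `d + 1` of them. If a translate `t + p i` of the corresponding vertices lay in the interior
of `C`, the supporting half-spaces would give `0 < ⟪bisector p i, t⟫` for each of them, which is
impossible for vectors whose convex hull contains `0`.
-/

open Set Filter Topology

section Convex

variable {𝕜 E ι : Type*} [Field 𝕜] [LinearOrder 𝕜] [IsStrictOrderedRing 𝕜]
  [AddCommGroup E] [Module 𝕜 E] [FiniteDimensional 𝕜 E]

theorem exists_finset_card_le_finrank_succ_mem_convexHull_image {v : ι → E} {x : E}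
    (hx : x ∈ convexHull 𝕜 (range v)) :
    ∃ I : Finset ι, I.card ≤ Module.finrank 𝕜 E + 1 ∧ x ∈ convexHull 𝕜 (v '' I) := by
  classical
  rw [convexHull_eq_union] at hx
  simp only [mem_iUnion] at hx
  obtain ⟨T, hTv, hTind, hxT⟩ := hx
  choose g hg using fun y : T => hTv y.2
  refine ⟨Finset.univ.image g, ?_, convexHull_mono ?_ hxT⟩
  · calc (Finset.univ.image g).card ≤ Fintype.card T := Finset.card_image_le
      _ ≤ Module.finrank 𝕜 (vectorSpan 𝕜 (range ((↑) : T → E))) + 1 :=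
        hTind.card_le_finrank_succ
      _ ≤ Module.finrank 𝕜 E + 1 := by gcongr; exact Submodule.finrank_le _
  · intro y hy
    exact ⟨g ⟨y, hy⟩, by simp, hg ⟨y, hy⟩⟩

end Convex

section InnerProductSpace

variable {E : Type*} [NormedAddCommGroup E] [InnerProductSpace ℝ E]

theorem exists_inner_nonpos_of_zero_mem_convexHull {s : Set E}
    (hs : (0 : E) ∈ convexHull ℝ s) (t : E) : ∃ x ∈ s, ⟪x, t⟫ ≤ 0 := by
  by_contra! hpos
  have hconv : Convex ℝ {x : E | 0 < ⟪x, t⟫} :=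
    convex_halfSpace_gt
      ⟨fun x y => inner_add_left x y t, fun c x => real_inner_smul_left x t c⟩ 0
  have h0 : 0 < ⟪(0 : E), t⟫ := convexHull_min hpos hconv hs
  simp at h0

theorem inner_pos_of_mem_interior_of_forall_inner_nonneg {C : Set E} {v x q : E} (hv : v ≠ 0)
    (hC : ∀ r ∈ C, 0 ≤ ⟪v, r - x⟫) (hq : q ∈ interior C) : 0 < ⟪v, q - x⟫ := by
  have hlim : Tendsto (fun ε : ℝ => q - ε • v) (𝓝[>] 0) (𝓝 q) := by
    have : Tendsto (fun ε : ℝ => q - ε • v) (𝓝 0) (𝓝 (q - (0 : ℝ) • v)) :=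
      tendsto_const_nhds.sub (tendsto_id.smul_const v)
    simpa using this.mono_left nhdsWithin_le_nhds
  obtain ⟨ε, hεC, hε⟩ :=
    ((hlim.eventually (mem_interior_iff_mem_nhds.1 hq)).and self_mem_nhdsWithin).exists
  have hv2 : 0 < ‖v‖ ^ 2 := by positivity
  have hshift : ⟪v, q - ε • v - x⟫ = ⟪v, q - x⟫ - ε * ‖v‖ ^ 2 := by
    rw [sub_right_comm, inner_sub_right, real_inner_smul_right, real_inner_self_eq_norm_sq]
  have hsupport := hC _ hεC
  rw [hshift] at hsupport
  nlinarith [mul_pos (mem_Ioi.1 hε) hv2]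

end InnerProductSpace

section Billiard

variable {d : ℕ}

def unitEdge (p : ℤ → EuclideanSpace ℝ (Fin d)) (i : ℤ) :
    EuclideanSpace ℝ (Fin d) :=
  ‖p (i + 1) - p i‖⁻¹ • (p (i + 1) - p i)

theorem bisector_eq_unitEdge_sub (p : ℤ → EuclideanSpace ℝ (Fin d)) (i : ℤ) :
    bisector p i = unitEdge p i - unitEdge p (i - 1) := by
  have hback : ‖p (i - 1) - p i‖⁻¹ • (p (i - 1) - p i) = -unitEdge p (i - 1) := by
    rw [unitEdge, sub_add_cancel, norm_sub_rev, ← smul_neg, neg_sub]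
  rw [bisector, hback, unitEdge]
  abel

theorem sum_range_bisector_eq_zero {n : ℕ} {p : ℤ → EuclideanSpace ℝ (Fin d)}
    (hper : ∀ i : ℤ, p (i + n) = p i) : ∑ i ∈ Finset.range n, bisector p i = 0 := by
  have hu : unitEdge p (n - 1) = unitEdge p (-1) := by
    simp only [unitEdge, sub_add_cancel, neg_add_cancel]
    rw [show ((n : ℤ) - 1) = -1 + n by ring, hper, ← zero_add (n : ℤ), hper]
  have hsum := Finset.sum_range_sub (fun k : ℕ => unitEdge p ((k : ℤ) - 1)) n
  simp only [Nat.cast_add, Nat.cast_one, add_sub_cancel_right, Nat.cast_zero, zero_sub, hu,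
    sub_self, ← bisector_eq_unitEdge_sub] at hsum
  exact hsum

theorem zero_mem_convexHull_range_bisector {n : ℕ} {p : ℤ → EuclideanSpace ℝ (Fin d)}
    (hp : IsClosedPolygonalPath n p) : (0 : EuclideanSpace ℝ (Fin d)) ∈
      convexHull ℝ (range (bisector p)) := by
  obtain ⟨hn, hper, -⟩ := hp
  have hmem := (Finset.range n).centerMass_mem_convexHull (w := fun _ => (1 : ℝ))
    (z := fun i : ℕ => bisector p i) (fun _ _ => zero_le_one)
    (by simp only [Finset.sum_const, Finset.card_range, nsmul_eq_mul, mul_one, Nat.cast_pos]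
        omega) (fun i _ => mem_range_self (i : ℤ))
  simpa [Finset.centerMass, sum_range_bisector_eq_zero hper] using hmem

end Billiard

theorem exists_small_subset_not_translatable_general
    {d : ℕ} (C : Set (EuclideanSpace ℝ (Fin d)))
    (n : ℕ) (p : ℤ → EuclideanSpace ℝ (Fin d)) (hp : IsGenBilliardTraj C n p) :
    ∃ S : Finset (EuclideanSpace ℝ (Fin d)), S.card ≤ d + 1 ∧ ↑S ⊆ Set.range p ∧
      ¬ ∃ t : EuclideanSpace ℝ (Fin d), ∀ x ∈ S, t + x ∈ interior C := by
  classical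
  obtain ⟨I, hIcard, hI⟩ := exists_finset_card_le_finrank_succ_mem_convexHull_image
    (zero_mem_convexHull_range_bisector hp.1)
  rw [finrank_euclideanSpace_fin] at hIcard
  refine ⟨I.image p, Finset.card_image_le.trans hIcard, by simp, ?_⟩
  rintro ⟨t, ht⟩
  obtain ⟨-, ⟨i, hi, rfl⟩, hnonpos⟩ := exists_inner_nonpos_of_zero_mem_convexHull hI t
  obtain ⟨-, hbis, hsupport⟩ := hp.2 i
  have hpos := inner_pos_of_mem_interior_of_forall_inner_nonneg hbis hsupport
    (ht _ (Finset.mem_image_of_mem p hi))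
  rw [add_sub_cancel_right] at hpos
  exact hnonpos.not_gt hpos

/-- If `p` is a generalized billiard trajectory of a convex body `C` in `ℝ^d`, then some
subset of its vertex set of at most `d + 1` elements cannot be translated into
the interior of `C`. -/
theorem exists_small_subset_not_translatable
    {d : ℕ} (hd : 2 ≤ d) (C : Set (EuclideanSpace ℝ (Fin d)))
    (hCc : IsCompact C) (hCconv : Convex ℝ C) (hCint : (interior C).Nonempty)
    (n : ℕ) (p : ℤ → EuclideanSpace ℝ (Fin d)) (hp : IsGenBilliardTraj C n p) :
    ∃ S : Finset (EuclideanSpace ℝ (Fin d)), S.card ≤ d + 1 ∧ ↑S ⊆ Set.range p ∧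
      ¬ ∃ t : EuclideanSpace ℝ (Fin d), ∀ x ∈ S, t + x ∈ interior C :=
  exists_small_subset_not_translatable_general C n p hp
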